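/- Let p be a prime, let X be the Pontryagin dual of the discrete abelian group ℤ[1/p]² (the compact group of characters with the topology of pointwise convergence), and let α̂ be the homeomorphic automorphism of X dual to α(a,b) = (a+b,b), i.e., α̂(χ) = χ∘α. Then the set of α̂-invariant Borel probability measures on X with finite support is NOT dense, in the topology of weak convergence of probability measures, in the set of all α̂-invariant Borel probability measures on X. -/

import Mathlib

def Zp (p : ℕ) : AddSubgroup ℚ where
  carrier := {q : ℚ | ∃ (k : ℤ) (n : ℕ), q * (p : ℚ) ^ n = (k : ℚ)}
  zero_mem' := ⟨0, 0, by norm_num⟩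
  add_mem' := by
    rintro a b ⟨k1, n1, h1⟩ ⟨k2, n2, h2⟩
    refine ⟨k1 * (p : ℤ) ^ n2 + k2 * (p : ℤ) ^ n1, n1 + n2, ?_⟩
    push_cast
    calc (a + b) * (p : ℚ) ^ (n1 + n2)
        = a * (p : ℚ) ^ n1 * (p : ℚ) ^ n2 + b * (p : ℚ) ^ n2 * (p : ℚ) ^ n1 := by
          rw [pow_add]; ring
      _ = (k1 : ℚ) * (p : ℚ) ^ n2 + (k2 : ℚ) * (p : ℚ) ^ n1 := by rw [h1, h2]
  neg_mem' := by
    rintro a ⟨k, n, h⟩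
    refine ⟨-k, n, ?_⟩
    push_cast
    rw [neg_mul, h]


open MeasureTheory

/-- The Pontryagin dual of the discrete abelian group `ℤ[1/p]²`: the group of characters
with values in the circle group. -/
abbrev Xp (p : ℕ) : Type := AddChar (Zp p × Zp p) Circle

/-- The topology of pointwise convergence on the dual. -/
noncomputable instance (p : ℕ) : TopologicalSpace (Xp p) :=
  TopologicalSpace.induced (fun χ : Xp p => (χ : Zp p × Zp p → Circle)) Pi.topologicalSpace

noncomputable instance (p : ℕ) : MeasurableSpace (Xp p) := borel (Xp p)

instance (p : ℕ) : BorelSpace (Xp p) := ⟨rfl⟩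

/-- The automorphism `α(a,b) = (a+b, b)` of `ℤ[1/p]²`, as an additive monoid hom. -/
def alphaHom (p : ℕ) : Zp p × Zp p →+ Zp p × Zp p where
  toFun x := (x.1 + x.2, x.2)
  map_zero' := by
    refine Prod.ext ?_ rfl
    show (0 : Zp p) + 0 = 0
    simp
  map_add' x y := by
    refine Prod.ext ?_ rfl
    show x.1 + y.1 + (x.2 + y.2) = x.1 + x.2 + (y.1 + y.2)
    abel

/-- The dual action `α̂(χ) = χ ∘ α` on the dual group. -/
noncomputable def alphaHat (p : ℕ) : Xp p → Xp p :=
  fun χ => χ.compAddMonoidHom (alphaHom p)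

/-!
For `χ ∈ X` write `u = χ(1/p, 0)`, `v = χ(0, 1)`, `t = χ(1, 0)` and test with
`F χ = Re ((u - 1) v)`. If `α̂^[L] χ = χ`, then `χ(L b, 0) = 1` for all `b`, so
`F (α̂^[k] χ) = Re ((u - 1) v t^k)` with `t^L = 1`. The orbit sum over `k < L` vanishes: by the
geometric sum when `t ≠ 1`, and when `t = 1` because then `u^p = t = 1` while `u^m = 1` for the
prime-to-`p` part `m` of `L`, so `u = 1`. Hence `∫ F = 0` for every finitely supported invariant
measure, and, `F` being continuous, for every measure in their weak closure.

On the other hand let `c(a, b) = e(a)`, `d(a, b) = e(b)` with `e(x) = exp(2πix)`, and let `K` be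
the annihilator of `ℤ[1/p] × ℤ`. Then `d ∈ K`, `α̂` fixes `K` pointwise and `α̂ c = c d`,
so `α̂ (c h) = c (d h)`: the image of the Haar measure of `K` under `h ↦ c h` is invariant.
But `F ≡ cos (2π/p) - 1 ≠ 0` on `c K`.
-/

open Function Set Finset BoundedContinuousFunction Real

theorem Set.Finite.exists_pos_iterate_eq_self_of_mapsTo {α : Type*} {f : α → α} {s : Set α}
    (hs : s.Finite) (hm : MapsTo f s s) (hf : InjOn f s) : ∃ L > 0, ∀ x ∈ s, f^[L] x = x := by
  have := hs.fintype
  refine ⟨(Fintype.card s).factorial, Nat.factorial_pos _, fun x hx => ?_⟩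
  have hid := injective_iff_iterate_factorial_card_eq_id.mp (hm.restrict_inj.mpr hf)
  have h := hm.coe_iterate_restrict ⟨x, hx⟩ (Fintype.card s).factorial
  rw [hid] at h
  exact h.symm

namespace MeasureTheory

variable {α : Type*} [MeasurableSpace α] {μ : Measure α} {f : α → α}

lemma MeasurePreserving.measure_singleton_apply [MeasurableSingletonClass α]
    (hf : MeasurePreserving f μ μ) (hinj : Injective f) (x : α) : μ {f x} = μ {x} := by
  rw [← hf.measure_preimage (measurableSet_singleton _).nullMeasurableSet,
    ← image_singleton, hinj.preimage_image]

lemma ae_mem_and_measure_singleton_ne_zero {s : Finset α} (hs : μ (↑s)ᶜ = 0) :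
    ∀ᵐ x ∂μ, x ∈ s ∧ μ {x} ≠ 0 := by
  have hatoms : ∀ᵐ x ∂μ, x ∈ s → μ {x} ≠ 0 := by
    rw [ae_iff]
    refine measure_mono_null (fun x hx => ?_) ((measure_biUnion_null_iff
      (s.filter (μ {·} = 0)).countable_toSet).mpr fun y hy => (Finset.mem_filter.mp hy).2)
    push Not at hx
    exact mem_biUnion (Finset.mem_filter.mpr hx) rfl
  filter_upwards [measure_eq_zero_iff_ae_notMem.mp hs, hatoms] with x hxs hx
  exact ⟨by simpa using hxs, hx (by simpa using hxs)⟩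

/-- The atoms of a finitely supported invariant measure form a finite set permuted by `f`. -/
theorem MeasurePreserving.exists_pos_ae_iterate_eq_self [MeasurableSingletonClass α]
    (hf : MeasurePreserving f μ μ) (hinj : Injective f) {s : Finset α} (hs : μ (↑s)ᶜ = 0) :
    ∃ L > 0, ∀ᵐ x ∂μ, f^[L] x = x := by
  classical
  set atoms := s.filter (μ {·} ≠ 0)
  have hmaps : MapsTo f atoms atoms := by
    intro x hx
    obtain ⟨hxs, hx0⟩ := Finset.mem_filter.mp hx
    rw [← hf.measure_singleton_apply hinj] at hx0
    refine Finset.mem_filter.mpr ⟨by_contra fun hfx => hx0 ?_, hx0⟩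
    exact measure_mono_null (singleton_subset_iff.mpr hfx) hs
  obtain ⟨L, hL, hper⟩ :=
    atoms.finite_toSet.exists_pos_iterate_eq_self_of_mapsTo hmaps hinj.injOn
  refine ⟨L, hL, ?_⟩
  filter_upwards [ae_mem_and_measure_singleton_ne_zero hs] with x hx
  exact hper x (Finset.mem_filter.mpr hx)

theorem MeasurePreserving.integral_eq_zero_of_ae_sum_iterate_eq_zero {E : Type*}
    [NormedAddCommGroup E] [NormedSpace ℝ E] (hf : MeasurePreserving f μ μ) {g : α → E}
    (hg : Integrable g μ) {L : ℕ} (hL : 0 < L)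
    (hsum : ∀ᵐ x ∂μ, ∑ k ∈ range L, g (f^[k] x) = 0) : ∫ x, g x ∂μ = 0 := by
  have hiter (k : ℕ) : ∫ x, g (f^[k] x) ∂μ = ∫ x, g x ∂μ := by
    have hmap := (hf.iterate k).map_eq
    rw [← integral_map (hf.iterate k).measurable.aemeasurable
      (by rw [hmap]; exact hg.aestronglyMeasurable), hmap]
  have hint (k : ℕ) : Integrable (fun x => g (f^[k] x)) μ :=
    (hf.iterate k).integrable_comp_of_integrable hg
  have : (L : ℝ) • ∫ x, g x ∂μ = 0 := calc
    (L : ℝ) • ∫ x, g x ∂μ = ∑ k ∈ range L, ∫ x, g (f^[k] x) ∂μ := by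
      simp [hiter, Nat.cast_smul_eq_nsmul]
    _ = ∫ x, ∑ k ∈ range L, g (f^[k] x) ∂μ := (integral_finsetSum _ fun k _ => hint k).symm
    _ = 0 := integral_eq_zero_of_ae hsum
  exact (smul_eq_zero.mp this).resolve_left (Nat.cast_ne_zero.mpr hL.ne')

end MeasureTheory

namespace Zp

variable (p : ℕ)

def one : Zp p := ⟨1, 1, 0, by simp⟩

-- `(p ^ n)⁻¹ * p ^ (2 * n) = p ^ n` holds also for `p = 0`.
def invPow (n : ℕ) : Zp p :=
  ⟨((p : ℚ) ^ n)⁻¹, p ^ n, 2 * n, by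
    push_cast; rw [mul_comm 2, pow_mul, sq, ← mul_assoc, inv_mul_mul_self]⟩

variable {p}

lemma nsmul_invPow_succ (hp : p ≠ 0) (k n : ℕ) :
    (k * p ^ n) • invPow p (n + 1) = k • invPow p 1 := by
  apply Subtype.ext
  simp only [AddSubmonoidClass.coe_nsmul, invPow, nsmul_eq_mul]
  push_cast
  field_simp
  ring

lemma nsmul_invPow_one (hp : p ≠ 0) : p • invPow p 1 = one p := by
  apply Subtype.ext
  simp [invPow, one, nsmul_eq_mul, hp]

lemma addChar_invPow_one_eq_one {M : Type*} [Monoid M] (hp : p.Prime)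
    (ψ : AddChar (Zp p) M) (hone : ψ (one p) = 1) {L : ℕ} (hL : 0 < L)
    (hker : ∀ b, ψ (L • b) = 1) : ψ (invPow p 1) = 1 := by
  set a := L.factorization p
  set m := L / p ^ a
  have hfac : m * p ^ a = L := by rw [mul_comm]; exact Nat.ordProj_mul_ordCompl_eq_self L p
  have hcop : p.Coprime m := hp.coprime_iff_not_dvd.mpr (Nat.not_dvd_ordCompl hp hL.ne')
  refine (pow_eq_one_iff_of_coprime hcop).mp ⟨?_, ?_⟩
  · rw [← AddChar.map_nsmul_eq_pow, nsmul_invPow_one hp.ne_zero, hone]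
  · rw [← AddChar.map_nsmul_eq_pow, ← nsmul_invPow_succ hp.ne_zero, hfac, hker]

variable (p)

noncomputable def toRealHom : Zp p →+ ℝ := (Rat.castHom ℝ).toAddMonoidHom.comp (Zp p).subtype

noncomputable def expChar : AddChar (Zp p) Circle := fourierChar.compAddMonoidHom (toRealHom p)

lemma expChar_apply (a : Zp p) : expChar p a = Circle.exp (2 * π * ((a : ℚ) : ℝ)) := rfl

lemma expChar_one : expChar p (one p) = 1 := by
  rw [expChar_apply, one, Rat.cast_one, mul_one, Circle.exp_two_pi]

end Zp

namespace Xp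

variable (p : ℕ)

lemma isEmbedding_coe : Topology.IsEmbedding (fun χ : Xp p => (χ : Zp p × Zp p → Circle)) :=
  ⟨⟨rfl⟩, DFunLike.coe_injective⟩

lemma isClosed_range_coe : IsClosed (Set.range (fun χ : Xp p => (χ : Zp p × Zp p → Circle))) :=
  (AddChar.toMonoidHomEquiv (A := Zp p × Zp p) (M := Circle)).symm.surjective.range_comp _ ▸
    MonoidHom.isClosed_range_coe (Multiplicative (Zp p × Zp p)) Circle

instance : T2Space (Xp p) := (isEmbedding_coe p).t2Space

instance : CompactSpace (Xp p) :=
  (Topology.IsClosedEmbedding.mk (isEmbedding_coe p) (isClosed_range_coe p)).compactSpace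

@[fun_prop]
lemma continuous_apply (g : Zp p × Zp p) : Continuous fun χ : Xp p => χ g :=
  (_root_.continuous_apply g).comp (isEmbedding_coe p).continuous

lemma continuous_of_continuous_apply {X : Type*} [TopologicalSpace X] {f : X → Xp p}
    (hf : ∀ g, Continuous fun x => f x g) : Continuous f :=
  continuous_induced_rng.2 (continuous_pi hf)

instance : IsTopologicalGroup (Xp p) where
  continuous_mul := continuous_of_continuous_apply p fun g =>
    ((continuous_apply p g).comp continuous_fst).mul ((continuous_apply p g).comp continuous_snd)
  continuous_inv := continuous_of_continuous_apply p fun g => continuous_apply p (-g)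

lemma apply_eq_mul (χ : Xp p) (a b : Zp p) : χ (a, b) = χ (a, 0) * χ (0, b) := by
  rw [← χ.map_add_eq_mul, Prod.mk_add_mk, add_zero, zero_add]

end Xp

section Dynamics

variable (p : ℕ)

lemma alphaHat_apply (χ : Xp p) (g : Zp p × Zp p) : alphaHat p χ g = χ (g.1 + g.2, g.2) := rfl

lemma iterate_alphaHat_apply (k : ℕ) (χ : Xp p) (g : Zp p × Zp p) :
    (alphaHat p)^[k] χ g = χ (g.1 + k • g.2, g.2) := by
  induction k generalizing χ with
  | zero => simp
  | succ k ih =>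
    simp only [iterate_succ_apply, ih, alphaHat_apply]
    rw [add_assoc, succ_nsmul]

lemma alphaHat_mul (χ ψ : Xp p) : alphaHat p (χ * ψ) = alphaHat p χ * alphaHat p ψ := rfl

lemma continuous_alphaHat : Continuous (alphaHat p) :=
  Xp.continuous_of_continuous_apply p fun _ => Xp.continuous_apply p _

lemma alphaHom_surjective : Surjective (alphaHom p) :=
  fun g => ⟨(g.1 - g.2, g.2), Prod.ext (sub_add_cancel g.1 g.2) rfl⟩

lemma alphaHat_injective : Injective (alphaHat p) :=
  AddChar.compAddMonoidHom_injective_left _ (alphaHom_surjective p)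

noncomputable def testFun : Xp p →ᵇ ℝ :=
  .mkOfCompact
    ⟨fun χ => (((χ (Zp.invPow p 1, 0) : ℂ) - 1) * χ (0, Zp.one p)).re, by fun_prop⟩

lemma testFun_apply (χ : Xp p) :
    testFun p χ = (((χ (Zp.invPow p 1, 0) : ℂ) - 1) * χ (0, Zp.one p)).re := rfl

end Dynamics

lemma sum_testFun_iterate_eq_zero {p : ℕ} (hp : p.Prime) {χ : Xp p} {L : ℕ} (hL : 0 < L)
    (hχ : (alphaHat p)^[L] χ = χ) : ∑ k ∈ range L, testFun p ((alphaHat p)^[k] χ) = 0 := by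
  set ψ : AddChar (Zp p) Circle := χ.compAddMonoidHom (AddMonoidHom.inl _ _)
  have hker (b : Zp p) : ψ (L • b) = 1 := by
    have h := DFunLike.congr_fun hχ (0, b)
    rwa [iterate_alphaHat_apply, zero_add, Xp.apply_eq_mul, mul_eq_right] at h
  have hterm (k : ℕ) : testFun p ((alphaHat p)^[k] χ) =
      ((((ψ (Zp.invPow p 1) : ℂ) - 1) * χ (0, Zp.one p)) * (ψ (Zp.one p) : ℂ) ^ k).re := by
    simp only [testFun_apply, iterate_alphaHat_apply, smul_zero, add_zero, zero_add]
    rw [Xp.apply_eq_mul p χ (k • _), ← Circle.coe_pow, ← AddChar.map_nsmul_eq_pow,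
      Circle.coe_mul]
    simp only [ψ, AddChar.compAddMonoidHom_apply, AddMonoidHom.inl_apply]
    ring_nf
  simp only [hterm, ← Complex.re_sum, ← mul_sum]
  by_cases hone : ψ (Zp.one p) = 1
  · simp [Zp.addChar_invPow_one_eq_one hp ψ hone hL hker]
  · have hne : (ψ (Zp.one p) : ℂ) ≠ 1 := fun h => hone (Circle.coe_eq_one.mp h)
    have hpow : (ψ (Zp.one p) : ℂ) ^ L = 1 := by
      rw [← Circle.coe_pow, ← AddChar.map_nsmul_eq_pow, hker, Circle.coe_one]
    simp [geom_sum_eq hne, hpow]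

lemma integral_testFun_eq_zero_of_finite_support {p : ℕ} (hp : p.Prime) {μ : Measure (Xp p)}
    [IsFiniteMeasure μ] (hinv : μ.map (alphaHat p) = μ) {s : Finset (Xp p)}
    (hs : μ (↑s)ᶜ = 0) :
    ∫ χ, testFun p χ ∂μ = 0 := by
  have hf : MeasurePreserving (alphaHat p) μ μ := ⟨(continuous_alphaHat p).measurable, hinv⟩
  obtain ⟨L, hL, hper⟩ := hf.exists_pos_ae_iterate_eq_self (alphaHat_injective p) hs
  exact hf.integral_eq_zero_of_ae_sum_iterate_eq_zero ((testFun p).integrable _) hL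
    (hper.mono fun χ hχ => sum_testFun_iterate_eq_zero hp hL hχ)

section CosetHaar

variable (p : ℕ)
noncomputable def baseChar : Xp p := (Zp.expChar p).compAddMonoidHom (AddMonoidHom.fst _ _)

noncomputable def shiftChar : Xp p := (Zp.expChar p).compAddMonoidHom (AddMonoidHom.snd _ _)

lemma alphaHat_baseChar : alphaHat p (baseChar p) = baseChar p * shiftChar p :=
  AddChar.ext _ _ fun g => (Zp.expChar p).map_add_eq_mul g.1 g.2

def annihilator : Subgroup (Xp p) where
  carrier := {χ | (∀ a, χ (a, 0) = 1) ∧ χ (0, Zp.one p) = 1}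
  one_mem' := ⟨fun _ => rfl, rfl⟩
  mul_mem' := fun ⟨hχ, hχ'⟩ ⟨hψ, hψ'⟩ =>
    ⟨fun a => by simp [hχ a, hψ a], by simp [hχ', hψ']⟩
  inv_mem' := fun ⟨hχ, hχ'⟩ =>
    ⟨fun a => by rw [AddChar.inv_apply', hχ a, inv_one],
      by rw [AddChar.inv_apply', hχ', inv_one]⟩

lemma isClosed_annihilator : IsClosed (annihilator p : Set (Xp p)) := by
  show IsClosed ({χ : Xp p | ∀ a, χ (a, 0) = 1} ∩ {χ | χ (0, Zp.one p) = 1})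
  rw [Set.ofPred_forall]
  exact (isClosed_iInter fun a => isClosed_eq (Xp.continuous_apply p (a, 0))
    continuous_const).inter (isClosed_eq (Xp.continuous_apply p _) continuous_const)

lemma shiftChar_mem_annihilator : shiftChar p ∈ annihilator p :=
  ⟨fun _ => (Zp.expChar p).map_zero_eq_one, Zp.expChar_one p⟩

lemma alphaHat_eq_self_of_mem_annihilator {h : Xp p} (hh : h ∈ annihilator p) :
    alphaHat p h = h :=
  AddChar.ext _ _ fun g => by
    rw [alphaHat_apply, Xp.apply_eq_mul, Xp.apply_eq_mul p h g.1, hh.1, hh.1]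

instance : CompactSpace (annihilator p) :=
  isCompact_iff_compactSpace.mp (isClosed_annihilator p).isCompact

noncomputable def haarAnnihilator : Measure (annihilator p) := Measure.haarMeasure ⊤

instance : IsProbabilityMeasure (haarAnnihilator p) :=
  ⟨by
    rw [haarAnnihilator, ← TopologicalSpace.PositiveCompacts.coe_top]
    exact Measure.haarMeasure_self⟩

instance : (haarAnnihilator p).IsMulLeftInvariant := Measure.isMulLeftInvariant_haarMeasure _

noncomputable def baseCoset (h : annihilator p) : Xp p := baseChar p * h

lemma continuous_baseCoset : Continuous (baseCoset p) := by unfold baseCoset; fun_prop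

noncomputable def cosetHaar : Measure (Xp p) := (haarAnnihilator p).map (baseCoset p)

instance : IsProbabilityMeasure (cosetHaar p) :=
  Measure.isProbabilityMeasure_map (continuous_baseCoset p).aemeasurable

lemma map_alphaHat_cosetHaar : (cosetHaar p).map (alphaHat p) = cosetHaar p := by
  have hconj : alphaHat p ∘ baseCoset p =
      baseCoset p ∘ (⟨shiftChar p, shiftChar_mem_annihilator p⟩ * ·) := by
    funext h
    simp [baseCoset, alphaHat_mul, alphaHat_baseChar, alphaHat_eq_self_of_mem_annihilator p h.2,
      mul_assoc]
  rw [cosetHaar, Measure.map_map (continuous_alphaHat p).measurable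
    (continuous_baseCoset p).measurable, hconj, ← Measure.map_map
    (continuous_baseCoset p).measurable (measurable_const_mul _), map_mul_left_eq_self]

lemma testFun_baseChar_mul {h : Xp p} (hh : h ∈ annihilator p) :
    testFun p (baseChar p * h) = cos (2 * π / p) - 1 := by
  have hfst : baseChar p (Zp.invPow p 1, 0) = Circle.exp (2 * π / p) := by
    simp [baseChar, Zp.expChar_apply, Zp.invPow, div_eq_mul_inv]
  have hsnd : baseChar p (0, Zp.one p) = 1 := (Zp.expChar p).map_zero_eq_one
  rw [testFun_apply, AddChar.mul_apply, AddChar.mul_apply, hh.1, hh.2, mul_one, mul_one, hfst,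
    hsnd, Circle.coe_one, mul_one, Complex.sub_re, Complex.one_re, Circle.coe_exp,
    Complex.exp_ofReal_mul_I_re]

lemma integral_testFun_cosetHaar : ∫ χ, testFun p χ ∂cosetHaar p = cos (2 * π / p) - 1 := by
  rw [cosetHaar, integral_map (continuous_baseCoset p).aemeasurable
    (testFun p).continuous.aestronglyMeasurable]
  simp [baseCoset, testFun_baseChar_mul p (Subtype.prop _)]

end CosetHaar

lemma cos_two_pi_div_ne_one {n : ℕ} (hn : 2 ≤ n) : cos (2 * π / n) ≠ 1 := by
  have hpos : 0 < 2 * π / n := by positivity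
  have hlt : 2 * π / n < 2 * π := div_lt_self (by positivity) (by exact_mod_cast hn)
  rw [Ne, cos_eq_one_iff_of_lt_of_lt (by linarith) hlt]
  exact hpos.ne'

/-- the `α̂`-invariant probability measures with finite support are not
dense (for the topology of weak convergence) in the set of all `α̂`-invariant
probability measures on the dual of `ℤ[1/p]²`. -/
theorem no_dense_periodic_measures (p : ℕ) (hp : p.Prime) :
    ¬ ({μ : ProbabilityMeasure (Xp p) | μ.toMeasure.map (alphaHat p) = μ.toMeasure} ⊆
        closure {μ : ProbabilityMeasure (Xp p) |
          μ.toMeasure.map (alphaHat p) = μ.toMeasure ∧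
          ∃ s : Finset (Xp p), μ.toMeasure (↑s : Set (Xp p))ᶜ = 0}) := by
  intro hdense
  have hclosed : IsClosed {μ : ProbabilityMeasure (Xp p) | ∫ χ, testFun p χ ∂μ = 0} :=
    isClosed_eq (ProbabilityMeasure.continuous_integral_boundedContinuousFunction _)
      continuous_const
  have hμ : ∫ χ, testFun p χ ∂cosetHaar p = 0 :=
    hclosed.closure_subset_iff.mpr
      (by rintro μ ⟨hinv, s, hs⟩; exact integral_testFun_eq_zero_of_finite_support hp hinv hs)
      (hdense (a := ⟨cosetHaar p, inferInstance⟩) (map_alphaHat_cosetHaar p))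
  rw [integral_testFun_cosetHaar, sub_eq_zero] at hμ
  exact cos_two_pi_div_ne_one hp.two_le hμ
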